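/- arXiv:math/0601739 — 2 statements merged into one kernel-verified Lean document; each statement's English description precedes it below -/
import Mathlib

section
/- Let $S \subseteq \mathbb{C}$ be a nonempty open connected set, let $f : S \to \mathbb{C}$ be holomorphic with $f'(\xi_0) \neq 0$ for some $\xi_0 \in S$, and let $(P_k)_{k \in \mathbb{N}}$ be a linearly independent family of polynomials in $\mathbb{C}[X]$. Then the family of functions $S \to \mathbb{C}$ given by $\xi \mapsto P_k(f(\xi))$, $k \in \mathbb{N}$, is linearly independent. -/
/-- If `f` is holomorphic on a nonempty open connected set `S ⊆ ℂ` with `f'(ξ₀) ≠ 0`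
for some `ξ₀ ∈ S`, and `(P_k)` is a linearly independent family of polynomials,
then the functions `ξ ↦ P_k (f ξ)` on `S` are linearly independent. -/
theorem composedPolynomials_linearIndependent (S : Set ℂ) (hSo : IsOpen S)
    (hSc : IsConnected S) (f : ℂ → ℂ) (hf : DifferentiableOn ℂ f S)
    (ξ₀ : ℂ) (hξ₀ : ξ₀ ∈ S) (hd : deriv f ξ₀ ≠ 0)
    (P : ℕ → Polynomial ℂ) (hP : LinearIndependent ℂ P) :
    LinearIndependent ℂ (fun k : ℕ => fun ξ : S => (P k).eval (f ξ)) := by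
  -- the image f '' S is infinite
  have hAn : AnalyticOnNhd ℂ f S := hf.analyticOnNhd hSo
  have himg : (f '' S).Infinite := by
    rcases hAn.is_constant_or_isOpen hSc.isPreconnected with ⟨w, hw⟩ | hopen
    · exfalso
      apply hd
      have hev : f =ᶠ[nhds ξ₀] (fun _ => w) := by
        filter_upwards [hSo.mem_nhds hξ₀] with z hz using hw z hz
      rw [hev.deriv_eq]
      simp
    · have ho : IsOpen (f '' S) := hopen S le_rfl hSo
      have hmem : f '' S ∈ nhds (f ξ₀) := ho.mem_nhds ⟨ξ₀, hξ₀, rfl⟩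
      exact infinite_of_mem_nhds (f ξ₀) hmem
  rw [linearIndependent_iff]
  intro l hl
  -- define Q as the corresponding combination of the polynomials
  set Q : Polynomial ℂ := Finsupp.linearCombination ℂ P l with hQ
  have hQroot : ∀ z ∈ f '' S, Q.IsRoot z := by
    rintro z ⟨ξ, hξ, rfl⟩
    have h0 : (Finsupp.linearCombination ℂ (fun k : ℕ => fun ξ : S => (P k).eval (f ξ))) l ⟨ξ, hξ⟩ = 0 := by
      rw [hl]; rfl
    simp only [Finsupp.linearCombination_apply, Finsupp.sum_apply, Finsupp.sum,
      Finset.sum_apply, Pi.smul_apply, smul_eq_mul] at h0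
    rw [hQ, Polynomial.IsRoot, Finsupp.linearCombination_apply, Finsupp.sum, Polynomial.eval_finset_sum]
    simpa using h0
  have hQ0 : Q = 0 := by
    apply Polynomial.eq_zero_of_infinite_isRoot
    exact Set.Infinite.mono (fun z hz => hQroot z hz) himg
  exact linearIndependent_iff.mp hP l hQ0
end

section
/- Let $D \subseteq \mathbb{C}^n$ be an open set, let $S \subseteq \mathbb{C}$ be a nonempty open connected set, and let $f : S \to \mathbb{C}^n$ be a holomorphic map with $f(S) \subseteq D$ whose first component $f_1$ satisfies $f_1'(\xi_0) \neq 0$ for some $\xi_0 \in S$. Let $\psi : D \to \ell^2(\mathbb{N}, \mathbb{C})$ be a map for which there exist an injection $\alpha : \mathbb{N} \to \mathbb{N}$ and a linearly independent family of polynomials $(P_k)_{k \in \mathbb{N}}$ in $\mathbb{C}[X]$ such that $\psi(z)(\alpha(k)) = P_k(z_1)$ for every $z = (z_1, \dots, z_n) \in D$ and every $k \in \mathbb{N}$. Then the $\mathbb{C}$-linear span of the set $\{\psi(f(\xi)) : \xi \in S\}$ in $\ell^2(\mathbb{N}, \mathbb{C})$ is not finite-dimensional. -/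
/-!
If the span of `ψ ∘ f` on `S` were finite-dimensional, the infinitely many coordinate functionals
`x ↦ x (α k)` would be linearly dependent on it, giving `c ≠ 0` with `∑ c_k P_k (f₁ ξ) = 0` for all
`ξ ∈ S`. The polynomial `∑ c_k P_k` is nonzero by independence of the `P_k`, yet it vanishes on
`f₁ '' S`, which is infinite because `f₁` has nonzero derivative at an interior point of `S`.
-/

open Filter Topology Polynomial

theorem ContinuousAt.eventuallyEq_const_of_finite_image {X Y : Type*} [TopologicalSpace X]
    [TopologicalSpace Y] [T1Space Y] {g : X → Y} {s : Set X} {x : X} (hg : ContinuousAt g x)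
    (hs : s ∈ 𝓝 x) (hfin : (g '' s).Finite) : g =ᶠ[𝓝 x] fun _ => g x := by
  have hnhds : (g '' s \ {g x})ᶜ ∈ 𝓝 (g x) :=
    (hfin.sdiff.isClosed.isOpen_compl).mem_nhds fun h => h.2 rfl
  filter_upwards [hs, hg hnhds] with z hz hzT
  by_contra hne
  exact hzT ⟨⟨z, hz, rfl⟩, hne⟩

theorem infinite_image_of_deriv_ne_zero {𝕜 F : Type*} [NontriviallyNormedField 𝕜]
    [NormedAddCommGroup F] [NormedSpace 𝕜 F] {g : 𝕜 → F} {s : Set 𝕜} {x : 𝕜}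
    (hs : s ∈ 𝓝 x) (hd : deriv g x ≠ 0) : (g '' s).Infinite := fun hfin =>
  hd <| ((differentiableAt_of_deriv_ne_zero hd).continuousAt.eventuallyEq_const_of_finite_image
    hs hfin).deriv_eq.trans (deriv_const x (g x))

theorem exists_ne_zero_linearCombination_apply_eq_zero {K M ι : Type*} [Field K]
    [AddCommGroup M] [Module K M] [Infinite ι] (A : Set M)
    [FiniteDimensional K (Submodule.span K A)] (φ : ι → M →ₗ[K] K) :
    ∃ c : ι →₀ K, c ≠ 0 ∧ ∀ a ∈ A, Finsupp.linearCombination K (fun k => φ k a) c = 0 := by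
  have hdep := Module.Finite.not_linearIndependent_of_infinite
    (R := K) fun k => (φ k).domRestrict (Submodule.span K A)
  rw [linearIndependent_iff] at hdep
  push Not at hdep
  obtain ⟨c, hc, hne⟩ := hdep
  refine ⟨c, hne, fun a ha => ?_⟩
  have hca := LinearMap.congr_fun hc ⟨a, Submodule.subset_span ha⟩
  rwa [← LinearMap.applyₗ_apply_apply (R := K), Finsupp.apply_linearCombination] at hca

theorem Polynomial.eval_linearCombination {R ι : Type*} [CommSemiring R] (P : ι → R[X])
    (c : ι →₀ R) (x : R) :
    (Finsupp.linearCombination R P c).eval x =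
      Finsupp.linearCombination R (fun k => (P k).eval x) c :=
  Finsupp.apply_linearCombination R (leval x) P c

theorem not_finiteDimensional_span_psi_comp_f_general (n : ℕ) (hn : 0 < n)
    (D : Set (Fin n → ℂ))
    (S : Set ℂ) (hSo : IsOpen S)
    (f : ℂ → (Fin n → ℂ)) (hfD : ∀ ξ ∈ S, f ξ ∈ D)
    (ξ₀ : ℂ) (hξ₀ : ξ₀ ∈ S) (hd : deriv (fun ξ => f ξ ⟨0, hn⟩) ξ₀ ≠ 0)
    (ψ : (Fin n → ℂ) → lp (fun _ : ℕ => ℂ) 2)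
    (α : ℕ → ℕ)
    (P : ℕ → Polynomial ℂ) (hP : LinearIndependent ℂ P)
    (hψ : ∀ z ∈ D, ∀ k : ℕ, (ψ z : ℕ → ℂ) (α k) = (P k).eval (z ⟨0, hn⟩)) :
    ¬ FiniteDimensional ℂ ↥(Submodule.span ℂ ((fun ξ : ℂ => ψ (f ξ)) '' S)) := by
  intro hfin
  obtain ⟨c, hc, hvanish⟩ := exists_ne_zero_linearCombination_apply_eq_zero
    ((fun ξ : ℂ => ψ (f ξ)) '' S) fun k => lp.evalₗ (𝕜 := ℂ) (fun _ : ℕ => ℂ) 2 (α k)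
  have hroots : (fun ξ => f ξ ⟨0, hn⟩) '' S ⊆ {x | (Finsupp.linearCombination ℂ P c).IsRoot x} := by
    rintro _ ⟨ξ, hξ, rfl⟩
    have hψξ := hvanish _ ⟨ξ, hξ, rfl⟩
    simp only [lp.evalₗ_apply, hψ _ (hfD ξ hξ)] at hψξ
    rwa [Set.mem_ofPred_eq, IsRoot.def, eval_linearCombination]
  exact hc <| linearIndependent_iff.mp hP c <| eq_zero_of_infinite_isRoot _ <|
    (infinite_image_of_deriv_ne_zero (hSo.mem_nhds hξ₀) hd).mono hroots

/-- Non-degeneracy of `Φ ∘ f`: let `D ⊆ ℂⁿ` be open, `S ⊆ ℂ` nonempty open connected,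
`f : S → D` holomorphic with first component having nonvanishing derivative at some
point of `S`, and let `ψ : D → ℓ²(ℕ, ℂ)` be such that for an injection `α : ℕ → ℕ`
and a linearly independent family of polynomials `(P_k)` one has
`ψ(z)(α k) = P_k(z₁)` on `D`. Then the span of `{ψ (f ξ) : ξ ∈ S}` in `ℓ²(ℕ, ℂ)`
is not finite-dimensional. -/
theorem not_finiteDimensional_span_psi_comp_f (n : ℕ) (hn : 0 < n)
    (D : Set (Fin n → ℂ)) (hDo : IsOpen D)
    (S : Set ℂ) (hSo : IsOpen S) (hSc : IsConnected S)
    (f : ℂ → (Fin n → ℂ)) (hf : DifferentiableOn ℂ f S) (hfD : ∀ ξ ∈ S, f ξ ∈ D)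
    (ξ₀ : ℂ) (hξ₀ : ξ₀ ∈ S) (hd : deriv (fun ξ => f ξ ⟨0, hn⟩) ξ₀ ≠ 0)
    (ψ : (Fin n → ℂ) → lp (fun _ : ℕ => ℂ) 2)
    (α : ℕ → ℕ) (hα : Function.Injective α)
    (P : ℕ → Polynomial ℂ) (hP : LinearIndependent ℂ P)
    (hψ : ∀ z ∈ D, ∀ k : ℕ, (ψ z : ℕ → ℂ) (α k) = (P k).eval (z ⟨0, hn⟩)) :
    ¬ FiniteDimensional ℂ ↥(Submodule.span ℂ ((fun ξ : ℂ => ψ (f ξ)) '' S)) :=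
  not_finiteDimensional_span_psi_comp_f_general n hn D S hSo f hfD ξ₀ hξ₀ hd ψ α P hP hψ
end
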